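/- arXiv:1512.01504 — 5 statements merged into one kernel-verified Lean document; each statement's English description precedes it below -/
import Mathlib

section
/- Let ρ_k ≥ 0 be a summable sequence of nonnegative reals and φ_k : (0,1) → ℂ an orthonormal family of H¹ functions with Σ_k ρ_k ‖φ_k'‖_{L²}² < ∞. Define n(x) = Σ_k ρ_k |φ_k(x)|². Then n ∈ W^{1,1}(0,1) and ‖n'‖_{L¹(0,1)} ≤ 2 (Σ_k ρ_k)^{1/2} (Σ_k ρ_k ‖φ_k'‖_{L²}²)^{1/2}. -/
/-!
Each summand `ρ_k |φ_k|²` has derivative `ρ_k · 2 Re(conj φ_k · φ_k')` on `(0,1)`, whose `L¹` norm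
is at most `2 ρ_k ‖φ_k'‖₂` by Cauchy–Schwarz and `‖φ_k‖₂ = 1`. Cauchy–Schwarz for series gives
`Σ ρ_k ‖φ_k'‖₂ ≤ (Σ ρ_k)^{1/2} (Σ ρ_k ‖φ_k'‖₂²)^{1/2}`, so the differentiated series converges in
`L¹` and can be integrated term by term. The series for `n` converges at every point since
`|φ_k(x)|² ≤ 1 + 2 ‖φ_k'‖₂`: somewhere `|φ_k|²` is at most its mean `1`, and its oscillation is
bounded by the `L¹` norm of its derivative.
-/

open MeasureTheory Set

/-- The local density `n(x) = Σ_k ρ_k |φ_k(x)|²`. -/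
noncomputable def localDensity (ρ : ℕ → ℝ) (φ : ℕ → ℝ → ℂ) (x : ℝ) : ℝ :=
  ∑' k, ρ k * ‖φ k x‖ ^ 2

/-- The (formal) derivative `Σ_k ρ_k (φ_k' \overline{φ_k} + φ_k \overline{φ_k'})`
of the local density. -/
noncomputable def localDensityDeriv (ρ : ℕ → ℝ) (φ D : ℕ → ℝ → ℂ) (x : ℝ) : ℝ :=
  ∑' k, ρ k * (2 * ((starRingEnd ℂ) (φ k x) * D k x).re)

open ComplexConjugate
open scoped Interval

section SeriesInL1

variable {α E ι : Type*} [MeasurableSpace α] {μ : Measure α} [NormedAddCommGroup E]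
  [Countable ι] {F : ι → α → E}

lemma tsum_toL1_ae_eq [CompleteSpace E] (hF_int : ∀ i, Integrable (F i) μ)
    (hF_sum : Summable fun i ↦ ∫ a, ‖F i a‖ ∂μ) :
    ⇑(∑' i, (hF_int i).toL1 (F i)) =ᵐ[μ] fun a ↦ ∑' i, F i a := by
  have hne : ∑' i, ‖(hF_int i).toL1 (F i)‖ₑ ≠ ⊤ := by
    refine tsum_enorm_ne_top_iff_summable_norm.2 (hF_sum.congr fun i ↦ ?_)
    exact (L1.norm_of_fun_eq_integral_norm (hF_int i)).symm
  filter_upwards [Lp.coeFn_tsum hne, ae_all_iff.2 fun i ↦ (hF_int i).coeFn_toL1] with a ha hF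
  simp only [ha, hF]

lemma integrable_tsum_of_summable_integral_norm [CompleteSpace E]
    (hF_int : ∀ i, Integrable (F i) μ) (hF_sum : Summable fun i ↦ ∫ a, ‖F i a‖ ∂μ) :
    Integrable (fun a ↦ ∑' i, F i a) μ :=
  (L1.integrable_coeFn _).congr (tsum_toL1_ae_eq hF_int hF_sum)

lemma integral_norm_tsum_le_tsum_integral_norm [NormedSpace ℝ E] [CompleteSpace E]
    (hF_int : ∀ i, Integrable (F i) μ)
    (hF_sum : Summable fun i ↦ ∫ a, ‖F i a‖ ∂μ) :
    ∫ a, ‖∑' i, F i a‖ ∂μ ≤ ∑' i, ∫ a, ‖F i a‖ ∂μ := by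
  have hnorm : ∀ i, ‖(hF_int i).toL1 (F i)‖ = ∫ a, ‖F i a‖ ∂μ :=
    fun i ↦ L1.norm_of_fun_eq_integral_norm (hF_int i)
  calc ∫ a, ‖∑' i, F i a‖ ∂μ = ‖∑' i, (hF_int i).toL1 (F i)‖ := by
        rw [L1.norm_eq_integral_norm]
        exact integral_congr_ae ((tsum_toL1_ae_eq hF_int hF_sum).fun_comp norm).symm
    _ ≤ ∑' i, ‖(hF_int i).toL1 (F i)‖ :=
        norm_tsum_le_tsum_norm (hF_sum.congr fun i ↦ (hnorm i).symm)
    _ = ∑' i, ∫ a, ‖F i a‖ ∂μ := tsum_congr hnorm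

lemma hasSum_intervalIntegral_of_summable_integral_norm [NormedSpace ℝ E] {s : Set ℝ}
    [s.OrdConnected] {F : ι → ℝ → E} (hF_int : ∀ i, IntegrableOn (F i) s)
    (hF_sum : Summable fun i ↦ ∫ x in s, ‖F i x‖) {a b : ℝ} (ha : a ∈ s) (hb : b ∈ s) :
    HasSum (fun i ↦ ∫ x in a..b, F i x) (∫ x in a..b, ∑' i, F i x) := by
  have hsub : ∀ {u v : ℝ}, u ∈ s → v ∈ s → Ioc u v ⊆ s :=
    fun hu hv ↦ Ioc_subset_Icc_self.trans (Set.OrdConnected.out ‹_› hu hv)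
  have hasSum_Ioc : ∀ {u v : ℝ}, u ∈ s → v ∈ s →
      HasSum (fun i ↦ ∫ x in Ioc u v, F i x) (∫ x in Ioc u v, ∑' i, F i x) := by
    intro u v hu hv
    refine hasSum_integral_of_summable_integral_norm
      (fun i ↦ (hF_int i).mono_set (hsub hu hv))
      (hF_sum.of_nonneg_of_le (fun i ↦ integral_nonneg fun x ↦ norm_nonneg _) fun i ↦ ?_)
    exact setIntegral_mono_set (hF_int i).norm (.of_forall fun x ↦ norm_nonneg _)
      (hsub hu hv).eventuallyLE
  exact (hasSum_Ioc ha hb).sub (hasSum_Ioc hb ha)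

end SeriesInL1

lemma Real.tsum_sqrt_mul_sqrt_le {ι : Type*} {f g : ι → ℝ} (hf : ∀ i, 0 ≤ f i)
    (hg : ∀ i, 0 ≤ g i) (hf_sum : Summable f) (hg_sum : Summable g) :
    Summable (fun i ↦ √(f i) * √(g i)) ∧
      ∑' i, √(f i) * √(g i) ≤ √(∑' i, f i) * √(∑' i, g i) := by
  have hsummable : Summable (fun i ↦ √(f i) * √(g i)) := by
    refine ((hf_sum.add hg_sum).div_const 2).of_nonneg_of_le (fun i ↦ by positivity) fun i ↦ ?_
    nlinarith [sq_nonneg (√(f i) - √(g i)), Real.sq_sqrt (hf i), Real.sq_sqrt (hg i)]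
  refine ⟨hsummable, hsummable.tsum_le_of_sum_le fun s ↦ ?_⟩
  calc ∑ i ∈ s, √(f i) * √(g i) ≤ √(∑ i ∈ s, f i) * √(∑ i ∈ s, g i) :=
        Real.sum_sqrt_mul_sqrt_le s hf hg
    _ ≤ √(∑' i, f i) * √(∑' i, g i) := by
        gcongr
        · exact hf_sum.sum_le_tsum s fun i _ ↦ hf i
        · exact hg_sum.sum_le_tsum s fun i _ ↦ hg i

lemma Real.tsum_mul_sqrt_le {ρ E : ℕ → ℝ} (hρ : ∀ k, 0 ≤ ρ k) (hE : ∀ k, 0 ≤ E k)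
    (hρ_sum : Summable ρ) (hρE_sum : Summable fun k ↦ ρ k * E k) :
    Summable (fun k ↦ ρ k * √(E k)) ∧
      ∑' k, ρ k * √(E k) ≤ √(∑' k, ρ k) * √(∑' k, ρ k * E k) := by
  have h_eq : ∀ k, √(ρ k) * √(ρ k * E k) = ρ k * √(E k) := fun k ↦ by
    rw [Real.sqrt_mul (hρ k), ← mul_assoc, Real.mul_self_sqrt (hρ k)]
  simpa only [h_eq] using
    Real.tsum_sqrt_mul_sqrt_le hρ (fun k ↦ mul_nonneg (hρ k) (hE k)) hρ_sum hρE_sum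

lemma HasDerivAt.complex_norm_sq {f : ℝ → ℂ} {d : ℂ} {x : ℝ} (hf : HasDerivAt f d x) :
    HasDerivAt (fun y ↦ ‖f y‖ ^ 2) (2 * (conj (f x) * d).re) x := by
  simpa only [Complex.inner, mul_comm d] using hf.norm_sq

lemma abs_two_re_conj_mul_le (z w : ℂ) : |2 * (conj z * w).re| ≤ 2 * (‖z‖ * ‖w‖) := by
  rw [abs_mul, abs_two, ← Complex.norm_conj z, ← norm_mul]
  gcongr
  exact Complex.abs_re_le_norm _

lemma integral_conj_mul_self {α : Type*} [MeasurableSpace α] {μ : Measure α} (u : α → ℂ) :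
    ∫ a, conj (u a) * u a ∂μ = ↑(∫ a, ‖u a‖ ^ 2 ∂μ) := by
  simp only [Complex.conj_mul', ← Complex.ofReal_pow, integral_complex_ofReal]

section SquareIntegrable

variable {α : Type*} [MeasurableSpace α] {μ : Measure α}

lemma integral_norm_mul_norm_le_sqrt {E : Type*} [NormedAddCommGroup E] {u v : α → E}
    (hu : MemLp u 2 μ) (hv : MemLp v 2 μ) :
    ∫ a, ‖u a‖ * ‖v a‖ ∂μ ≤ √(∫ a, ‖u a‖ ^ 2 ∂μ) * √(∫ a, ‖v a‖ ^ 2 ∂μ) := by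
  have h := integral_mul_norm_le_Lp_mul_Lq (μ := μ) Real.HolderConjugate.two_two
    (by simpa using hu) (by simpa using hv)
  simpa only [Real.sqrt_eq_rpow, one_div, Real.rpow_two] using h

variable {u v : α → ℂ}

lemma integrable_two_re_conj_mul (hu : MemLp u 2 μ) (hv : MemLp v 2 μ) :
    Integrable (fun a ↦ 2 * (conj (u a) * v a).re) μ :=
  ((hu.star.integrable_mul hv).re).const_mul 2

lemma integral_abs_two_re_conj_mul_le (hu : MemLp u 2 μ) (hv : MemLp v 2 μ) :
    ∫ a, |2 * (conj (u a) * v a).re| ∂μ ≤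
      2 * (√(∫ a, ‖u a‖ ^ 2 ∂μ) * √(∫ a, ‖v a‖ ^ 2 ∂μ)) := by
  calc ∫ a, |2 * (conj (u a) * v a).re| ∂μ ≤ ∫ a, 2 * (‖u a‖ * ‖v a‖) ∂μ :=
        integral_mono (integrable_two_re_conj_mul hu hv).abs
          ((hu.norm.integrable_mul hv.norm).const_mul 2) fun a ↦ abs_two_re_conj_mul_le _ _
    _ ≤ 2 * (√(∫ a, ‖u a‖ ^ 2 ∂μ) * √(∫ a, ‖v a‖ ^ 2 ∂μ)) := by
        rw [integral_const_mul]
        gcongr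
        exact integral_norm_mul_norm_le_sqrt hu hv

end SquareIntegrable

lemma aestronglyMeasurable_restrict_of_hasDerivAt {E : Type*} [NormedAddCommGroup E]
    [NormedSpace ℝ E] [CompleteSpace E] {s : Set ℝ} {F f : ℝ → E} (hs : MeasurableSet s)
    (hF : ∀ x ∈ s, HasDerivAt F (f x) x) : AEStronglyMeasurable f (volume.restrict s) :=
  (stronglyMeasurable_deriv F).aestronglyMeasurable.congr <|
    (ae_restrict_iff' hs).2 (.of_forall fun x hx ↦ (hF x hx).deriv)

section OrdConnected

variable {s : Set ℝ} [s.OrdConnected]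

lemma integral_eq_sub_of_hasDerivAt_of_ordConnected {F f : ℝ → ℝ}
    (hF : ∀ x ∈ s, HasDerivAt F (f x) x) (hf : IntegrableOn f s) {a b : ℝ} (ha : a ∈ s)
    (hb : b ∈ s) : ∫ x in a..b, f x = F b - F a := by
  have hsub : uIcc a b ⊆ s := Set.OrdConnected.uIcc_subset ‹_› ha hb
  exact intervalIntegral.integral_eq_sub_of_hasDerivAt (fun x hx ↦ hF x (hsub hx))
    ((hf.mono_set hsub).intervalIntegrable)

lemma le_setAverage_add_integral_abs_of_hasDerivAt (hs₀ : volume s ≠ 0) (hs : volume s ≠ ⊤)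
    {F f : ℝ → ℝ} (hF : ∀ x ∈ s, HasDerivAt F (f x) x) (hF_int : IntegrableOn F s)
    (hf : IntegrableOn f s) {x : ℝ} (hx : x ∈ s) :
    F x ≤ (⨍ y in s, F y) + ∫ y in s, |f y| := by
  obtain ⟨y, hy, hFy⟩ := exists_le_setAverage hs₀ hs hF_int
  have hsub : Ι y x ⊆ s := uIoc_subset_uIcc.trans (Set.OrdConnected.uIcc_subset ‹_› hy hx)
  have hvar : F x - F y ≤ ∫ t in s, |f t| :=
    calc F x - F y = ∫ t in y..x, f t :=
          (integral_eq_sub_of_hasDerivAt_of_ordConnected hF hf hy hx).symm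
      _ ≤ ∫ t in Ι y x, |f t| := by
          simpa only [Real.norm_eq_abs] using
            (le_abs_self _).trans (intervalIntegral.norm_integral_le_integral_norm_uIoc
              (f := f) (a := y) (b := x) (μ := volume))
      _ ≤ ∫ t in s, |f t| :=
          setIntegral_mono_set hf.abs (.of_forall fun t ↦ abs_nonneg _) hsub.eventuallyLE
  linarith

lemma integrableOn_tsum_and_integral_eq_sub_of_hasDerivAt {F f : ℕ → ℝ → ℝ}
    (hF : ∀ k, ∀ x ∈ s, HasDerivAt (F k) (f k x) x) (hf : ∀ k, IntegrableOn (f k) s)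
    (hf_sum : Summable fun k ↦ ∫ x in s, |f k x|) (hF_sum : ∀ x ∈ s, Summable fun k ↦ F k x) :
    IntegrableOn (fun x ↦ ∑' k, f k x) s ∧
    (∀ a ∈ s, ∀ b ∈ s, ∑' k, F k b - ∑' k, F k a = ∫ x in a..b, ∑' k, f k x) ∧
    ∫ x in s, |∑' k, f k x| ≤ ∑' k, ∫ x in s, |f k x| := by
  refine ⟨integrable_tsum_of_summable_integral_norm hf hf_sum, fun a ha b hb ↦ ?_,
    integral_norm_tsum_le_tsum_integral_norm hf hf_sum⟩
  rw [← (hF_sum b hb).tsum_sub (hF_sum a ha)]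
  rw [← (hasSum_intervalIntegral_of_summable_integral_norm hf hf_sum ha hb).tsum_eq]
  exact tsum_congr fun k ↦
    (integral_eq_sub_of_hasDerivAt_of_ordConnected (hF k) (hf k) ha hb).symm

end OrdConnected

section UnitIntervalH1

variable {u u' : ℝ → ℂ}

lemma memLp_two_restrict_of_hasDerivAt {s : Set ℝ} (hs : MeasurableSet s)
    (hu : ∀ x ∈ s, HasDerivAt u (u' x) x) (hu₂ : IntegrableOn (fun x ↦ ‖u x‖ ^ 2) s)
    (hu'₂ : IntegrableOn (fun x ↦ ‖u' x‖ ^ 2) s) :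
    MemLp u 2 (volume.restrict s) ∧ MemLp u' 2 (volume.restrict s) :=
  ⟨(memLp_two_iff_integrable_sq_norm
      (ContinuousOn.aestronglyMeasurable
        (fun x hx ↦ (hu x hx).continuousAt.continuousWithinAt) hs)).2 hu₂,
    (memLp_two_iff_integrable_sq_norm (aestronglyMeasurable_restrict_of_hasDerivAt hs hu)).2 hu'₂⟩

lemma integral_abs_deriv_norm_sq_le (hu₂ : MemLp u 2 (volume.restrict (Ioo 0 1)))
    (hu'₂ : MemLp u' 2 (volume.restrict (Ioo 0 1)))
    (h_norm : ∫ x in Ioo (0 : ℝ) 1, ‖u x‖ ^ 2 = 1) :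
    ∫ x in Ioo (0 : ℝ) 1, |2 * (conj (u x) * u' x).re| ≤
      2 * √(∫ x in Ioo (0 : ℝ) 1, ‖u' x‖ ^ 2) := by
  simpa [h_norm] using integral_abs_two_re_conj_mul_le hu₂ hu'₂

lemma norm_sq_le_one_add_two_sqrt (hu : ∀ x ∈ Ioo (0 : ℝ) 1, HasDerivAt u (u' x) x)
    (hu₂ : MemLp u 2 (volume.restrict (Ioo 0 1)))
    (hu'₂ : MemLp u' 2 (volume.restrict (Ioo 0 1)))
    (h_norm : ∫ x in Ioo (0 : ℝ) 1, ‖u x‖ ^ 2 = 1) {x : ℝ} (hx : x ∈ Ioo (0 : ℝ) 1) :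
    ‖u x‖ ^ 2 ≤ 1 + 2 * √(∫ x in Ioo (0 : ℝ) 1, ‖u' x‖ ^ 2) := by
  have h_avg : ⨍ y in Ioo (0 : ℝ) 1, ‖u y‖ ^ 2 = 1 := by
    simp [setAverage_eq, h_norm]
  have h_le := le_setAverage_add_integral_abs_of_hasDerivAt (by simp) (by simp)
    (fun y hy ↦ (hu y hy).complex_norm_sq) ((memLp_two_iff_integrable_sq_norm hu₂.1).1 hu₂)
    (integrable_two_re_conj_mul hu₂ hu'₂) hx
  linarith [integral_abs_deriv_norm_sq_le hu₂ hu'₂ h_norm]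

end UnitIntervalH1

/-- If `ρ_k ≥ 0` is summable, `(φ_k)` is an orthonormal family of `H¹(0,1)` functions
(with derivatives `D_k`) and `Σ_k ρ_k ‖φ_k'‖_{L²}² < ∞`, then
`n(x) = Σ_k ρ_k |φ_k(x)|²` belongs to `W^{1,1}(0,1)`, its derivative being
`g = Σ_k ρ_k (φ_k' \overline{φ_k} + φ_k \overline{φ_k'})`, with
`‖n'‖_{L¹} ≤ 2 (Σ_k ρ_k)^{1/2} (Σ_k ρ_k ‖φ_k'‖_{L²}²)^{1/2}`. -/
theorem localDensity_W11_bound (ρ : ℕ → ℝ) (φ D : ℕ → ℝ → ℂ)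
    (hρ : ∀ k, 0 ≤ ρ k) (hsum : Summable ρ)
    (hderiv : ∀ k, ∀ x ∈ Ioo (0 : ℝ) 1, HasDerivAt (φ k) (D k x) x)
    (hφL2 : ∀ k, IntegrableOn (fun x => ‖φ k x‖ ^ 2) (Ioo 0 1))
    (hDL2 : ∀ k, IntegrableOn (fun x => ‖D k x‖ ^ 2) (Ioo 0 1))
    (horth : ∀ j k, (∫ x in Ioo (0 : ℝ) 1, (starRingEnd ℂ) (φ j x) * φ k x) =
      if j = k then 1 else 0)
    (hE : Summable (fun k => ρ k * ∫ x in Ioo (0 : ℝ) 1, ‖D k x‖ ^ 2)) :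
    IntegrableOn (localDensityDeriv ρ φ D) (Ioo 0 1) ∧
    (∀ a ∈ Ioo (0 : ℝ) 1, ∀ b ∈ Ioo (0 : ℝ) 1,
      localDensity ρ φ b - localDensity ρ φ a = ∫ x in a..b, localDensityDeriv ρ φ D x) ∧
    (∫ x in Ioo (0 : ℝ) 1, |localDensityDeriv ρ φ D x|) ≤
      2 * Real.sqrt (∑' k, ρ k) *
        Real.sqrt (∑' k, ρ k * ∫ x in Ioo (0 : ℝ) 1, ‖D k x‖ ^ 2) := by
  set E : ℕ → ℝ := fun k ↦ ∫ x in Ioo (0 : ℝ) 1, ‖D k x‖ ^ 2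
  have hL2 k := memLp_two_restrict_of_hasDerivAt measurableSet_Ioo (hderiv k) (hφL2 k) (hDL2 k)
  have h_norm k : ∫ x in Ioo (0 : ℝ) 1, ‖φ k x‖ ^ 2 = 1 := by
    exact_mod_cast (integral_conj_mul_self (φ k)).symm.trans ((horth k k).trans (if_pos rfl))
  obtain ⟨hc_sum, hc_le⟩ := Real.tsum_mul_sqrt_le hρ
    (fun k ↦ setIntegral_nonneg measurableSet_Ioo fun x _ ↦ by positivity) hsum hE
  have h_term_le k : ∫ x in Ioo (0 : ℝ) 1, |ρ k * (2 * (conj (φ k x) * D k x).re)| ≤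
      2 * (ρ k * √(E k)) := by
    simp_rw [abs_mul (ρ k), abs_of_nonneg (hρ k), integral_const_mul]
    rw [mul_left_comm]
    exact mul_le_mul_of_nonneg_left (integral_abs_deriv_norm_sq_le (hL2 k).1 (hL2 k).2 (h_norm k))
      (hρ k)
  have h_terms_sum := (hc_sum.mul_left 2).of_nonneg_of_le
    (fun k ↦ integral_nonneg fun x ↦ abs_nonneg _) h_term_le
  have h_density_sum (x : ℝ) (hx : x ∈ Ioo (0 : ℝ) 1) :
      Summable fun k ↦ ρ k * ‖φ k x‖ ^ 2 :=
    (hsum.add (hc_sum.mul_left 2)).of_nonneg_of_le (fun k ↦ mul_nonneg (hρ k) (sq_nonneg _))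
      fun k ↦ (mul_le_mul_of_nonneg_left (norm_sq_le_one_add_two_sqrt (hderiv k) (hL2 k).1
        (hL2 k).2 (h_norm k) hx) (hρ k)).trans_eq (by ring)
  obtain ⟨h_int, h_ftc, h_bound⟩ := integrableOn_tsum_and_integral_eq_sub_of_hasDerivAt
    (fun k x hx ↦ (hderiv k x hx).complex_norm_sq.const_mul (ρ k))
    (fun k ↦ (integrable_two_re_conj_mul (hL2 k).1 (hL2 k).2).const_mul (ρ k))
    h_terms_sum h_density_sum
  refine ⟨h_int, h_ftc, h_bound.trans ?_⟩
  calc ∑' k, ∫ x in Ioo (0 : ℝ) 1, |ρ k * (2 * (conj (φ k x) * D k x).re)|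
      ≤ ∑' k, 2 * (ρ k * √(E k)) := h_terms_sum.tsum_le_tsum h_term_le (hc_sum.mul_left 2)
    _ ≤ 2 * √(∑' k, ρ k) * √(∑' k, ρ k * E k) := by
        rw [tsum_mul_left, mul_assoc]
        gcongr
end

section
/- Let H₁ and H₂ be Hermitian matrices in ℂ^{n×n} and let φ : ℝ → ℝ be a convex differentiable function. Then Tr(φ(H₁) − φ(H₂) − (H₁ − H₂)·φ'(H₂)) ≥ 0, where φ(H) and φ'(H) are defined by functional calculus. -/
/-!
Write `H₁ = U diag(λ) U*` and `H₂ = V diag(μ) V*`. For any `f, g`,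
`Tr(f(H₁) g(H₂)) = ∑ᵢⱼ pᵢⱼ f(λᵢ) g(μⱼ)` with `pᵢⱼ = |(U*V)ᵢⱼ|² ≥ 0`. Writing `φ(H₁) = φ(H₁)·1(H₂)`,
`φ(H₂) = 1(H₁)·φ(H₂)` and `H₂ φ'(H₂) = 1(H₁)·(id·φ')(H₂)`, the trace in question becomes
`∑ᵢⱼ pᵢⱼ (φ(λᵢ) − φ(μⱼ) − (λᵢ − μⱼ) φ'(μⱼ))`, and each bracket is nonnegative because a convex
function lies above its tangent lines.
-/

open Matrix

variable {n : ℕ}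

/-- Functional calculus for a Hermitian matrix: apply `f : ℝ → ℝ` to the eigenvalues in an
orthonormal eigenbasis. -/
noncomputable def hermitianApply (f : ℝ → ℝ) (H : Matrix (Fin n) (Fin n) ℂ)
    (hH : H.IsHermitian) : Matrix (Fin n) (Fin n) ℂ :=
  (hH.eigenvectorUnitary : Matrix (Fin n) (Fin n) ℂ) *
    diagonal (fun i => (f (hH.eigenvalues i) : ℂ)) *
    star (hH.eigenvectorUnitary : Matrix (Fin n) (Fin n) ℂ)

open Finset

lemma ConvexOn.sub_mul_le_sub_of_hasDerivAt {S : Set ℝ} {f : ℝ → ℝ} {f' a b : ℝ}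
    (hf : ConvexOn ℝ S f) (ha : a ∈ S) (hb : b ∈ S) (hderiv : HasDerivAt f f' b) :
    (a - b) * f' ≤ f a - f b := by
  rcases lt_trichotomy a b with h | rfl | h
  · have := hf.slope_le_of_hasDerivAt ha hb h hderiv
    rw [slope_def_field, div_le_iff₀ (by linarith)] at this
    nlinarith
  · simp
  · have := hf.le_slope_of_hasDerivAt hb ha h hderiv
    rw [slope_def_field, le_div_iff₀ (by linarith)] at this
    nlinarith

lemma Matrix.trace_diagonal_mul_mul_diagonal_mul_conjTranspose {m : Type*} [Fintype m]
    [DecidableEq m] (W : Matrix m m ℂ) (a b : m → ℂ) :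
    (diagonal a * W * diagonal b * Wᴴ).trace =
      ∑ i, ∑ j, (Complex.normSq (W i j) : ℂ) * a i * b j := by
  simp only [trace, diag_apply, mul_apply, diagonal_apply, conjTranspose_apply, ite_mul, zero_mul,
    mul_ite, mul_zero, sum_ite_eq, sum_ite_eq', mem_univ, if_true]
  refine sum_congr rfl fun i _ => sum_congr rfl fun j _ => ?_
  rw [Complex.normSq_eq_conj_mul_self, RCLike.star_def]
  ring

section FunctionalCalculus

variable {H : Matrix (Fin n) (Fin n) ℂ} (hH : H.IsHermitian)

lemma hermitianApply_id : hermitianApply id H hH = H := by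
  conv_rhs => rw [hH.spectral_theorem]
  rfl

lemma hermitianApply_one : hermitianApply 1 H hH = 1 := by
  simp [hermitianApply]

lemma hermitianApply_mul (f g : ℝ → ℝ) :
    hermitianApply f H hH * hermitianApply g H hH = hermitianApply (f * g) H hH := by
  simp only [hermitianApply, Matrix.mul_assoc, ← Matrix.mul_assoc (star _) (_ : Matrix _ _ ℂ),
    Unitary.coe_star_mul_self, Matrix.one_mul]
  rw [← Matrix.mul_assoc (diagonal _), diagonal_mul_diagonal]
  simp only [Pi.mul_apply, Complex.ofReal_mul]

end FunctionalCalculus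

/-- The weight `|⟨uᵢ, vⱼ⟩|²` between the `i`-th eigenvector of `A` and the `j`-th one of `B`. -/
noncomputable def eigenvectorOverlap {A B : Matrix (Fin n) (Fin n) ℂ} (hA : A.IsHermitian)
    (hB : B.IsHermitian) (i j : Fin n) : ℝ :=
  Complex.normSq
    ((star (hA.eigenvectorUnitary : Matrix (Fin n) (Fin n) ℂ) * hB.eigenvectorUnitary) i j)

lemma trace_hermitianApply_mul_hermitianApply (f g : ℝ → ℝ) {A B : Matrix (Fin n) (Fin n) ℂ}
    (hA : A.IsHermitian) (hB : B.IsHermitian) :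
    (hermitianApply f A hA * hermitianApply g B hB).trace =
      ∑ i, ∑ j, (eigenvectorOverlap hA hB i j : ℂ) * f (hA.eigenvalues i) *
        g (hB.eigenvalues j) := by
  set U : Matrix (Fin n) (Fin n) ℂ := (hA.eigenvectorUnitary : Matrix (Fin n) (Fin n) ℂ)
  simp only [eigenvectorOverlap]
  rw [← trace_diagonal_mul_mul_diagonal_mul_conjTranspose, conjTranspose_mul,
    ← star_eq_conjTranspose, ← star_eq_conjTranspose, star_star]
  simp only [hermitianApply, Matrix.mul_assoc]
  rw [trace_mul_comm U]
  simp only [Matrix.mul_assoc]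
  rfl

lemma trace_bregman_eq_sum_eigenvectorOverlap {H₁ H₂ : Matrix (Fin n) (Fin n) ℂ}
    (h₁ : H₁.IsHermitian) (h₂ : H₂.IsHermitian) (φ φ' : ℝ → ℝ) :
    (hermitianApply φ H₁ h₁ - hermitianApply φ H₂ h₂ -
      (H₁ - H₂) * hermitianApply φ' H₂ h₂).trace =
      ((∑ i, ∑ j, eigenvectorOverlap h₁ h₂ i j * (φ (h₁.eigenvalues i) - φ (h₂.eigenvalues j) -
        (h₁.eigenvalues i - h₂.eigenvalues j) * φ' (h₂.eigenvalues j)) : ℝ) : ℂ) := by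
  have hsplit : hermitianApply φ H₁ h₁ - hermitianApply φ H₂ h₂ -
      (H₁ - H₂) * hermitianApply φ' H₂ h₂ =
      hermitianApply φ H₁ h₁ * hermitianApply 1 H₂ h₂ -
        hermitianApply 1 H₁ h₁ * hermitianApply φ H₂ h₂ -
        hermitianApply id H₁ h₁ * hermitianApply φ' H₂ h₂ +
        hermitianApply 1 H₁ h₁ * hermitianApply (id * φ') H₂ h₂ := by
    rw [hermitianApply_one, hermitianApply_one, hermitianApply_id, ← hermitianApply_mul,
      hermitianApply_id]
    noncomm_ring
  rw [hsplit, trace_add, trace_sub, trace_sub]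
  simp only [trace_hermitianApply_mul_hermitianApply, ← sum_sub_distrib, ← sum_add_distrib]
  push_cast
  refine sum_congr rfl fun i _ => sum_congr rfl fun j _ => ?_
  simp only [Pi.one_apply, Pi.mul_apply, id]
  push_cast
  ring

/-- Klein inequality for Hermitian matrices: for Hermitian `H₁, H₂` and a convex
differentiable function `φ : ℝ → ℝ` (with derivative `φ'`),
`Tr(φ(H₁) − φ(H₂) − (H₁ − H₂)·φ'(H₂)) ≥ 0`. -/
theorem klein_inequality (H₁ H₂ : Matrix (Fin n) (Fin n) ℂ)
    (h₁ : H₁.IsHermitian) (h₂ : H₂.IsHermitian)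
    (φ φ' : ℝ → ℝ) (hconv : ConvexOn ℝ Set.univ φ)
    (hderiv : ∀ x : ℝ, HasDerivAt φ (φ' x) x) :
    0 ≤ (Matrix.trace (hermitianApply φ H₁ h₁ - hermitianApply φ H₂ h₂ -
      (H₁ - H₂) * hermitianApply φ' H₂ h₂)).re := by
  rw [trace_bregman_eq_sum_eigenvectorOverlap, Complex.ofReal_re]
  refine sum_nonneg fun i _ => sum_nonneg fun j _ => mul_nonneg (Complex.normSq_nonneg _) ?_
  exact sub_nonneg.mpr <| hconv.sub_mul_le_sub_of_hasDerivAt (Set.mem_univ _) (Set.mem_univ _)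
    (hderiv _)
end

section
/- Let ρ₁ and ρ₂ be positive semidefinite Hermitian matrices in ℂ^{n×n} with Tr ρ₁ = Tr ρ₂ and with all eigenvalues in (0, M]. If Tr(ρ₁ log ρ₁ − ρ₁ log ρ₂) = 0, then ρ₁ = ρ₂. -/
open Matrix
open scoped ComplexOrder

variable {n : ℕ}

private lemma aux_ineq {a b : ℝ} (ha : 0 < a) (hb : 0 < b) :
    a - b ≤ a * (Real.log a - Real.log b) := by
  have h := Real.log_le_sub_one_of_pos (div_pos hb ha)
  rw [Real.log_div hb.ne' ha.ne'] at h
  have h2 : a * (Real.log b - Real.log a) ≤ a * (b / a - 1) :=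
    mul_le_mul_of_nonneg_left h ha.le
  have h3 : a * (b / a) = b := mul_div_cancel₀ b ha.ne'
  nlinarith

private lemma aux_ineq_strict {a b : ℝ} (ha : 0 < a) (hb : 0 < b) (hne : a ≠ b) :
    a - b < a * (Real.log a - Real.log b) := by
  have hba : b / a ≠ 1 := by
    intro h
    rw [div_eq_one_iff_eq ha.ne'] at h
    exact hne h.symm
  have h := Real.log_lt_sub_one_of_pos (div_pos hb ha) hba
  rw [Real.log_div hb.ne' ha.ne'] at h
  have h2 : a * (Real.log b - Real.log a) < a * (b / a - 1) :=
    (mul_lt_mul_iff_right₀ ha).mpr h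
  have h3 : a * (b / a) = b := mul_div_cancel₀ b ha.ne'
  nlinarith

private lemma trace_conj_diag_eq (U : Matrix (Fin n) (Fin n) ℂ)
    (hU' : star U * U = 1) (d : Fin n → ℂ) :
    trace (U * diagonal d * star U) = ∑ i, d i := by
  rw [trace_mul_comm, ← Matrix.mul_assoc, hU', one_mul, trace_diagonal]

private lemma trace_conj_mul (U V : Matrix (Fin n) (Fin n) ℂ) (d l : Fin n → ℂ) :
    trace ((U * diagonal d * star U) * (V * diagonal l * star V)) =
      trace (diagonal d * ((star U * V) * diagonal l * (star V * U))) := by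
  simp only [Matrix.mul_assoc]
  rw [trace_mul_comm]
  simp only [Matrix.mul_assoc]

private lemma trace_diag_sum (W : Matrix (Fin n) (Fin n) ℂ) (d l : Fin n → ℂ) :
    trace (diagonal d * (W * diagonal l * Wᴴ)) =
      ∑ i, ∑ j, d i * (W i j * l j * (starRingEnd ℂ) (W i j)) := by
  simp [Matrix.trace, Matrix.mul_apply, Matrix.diagonal, Finset.mul_sum,
    Matrix.conjTranspose_apply, Matrix.diag]

/-- Core algebraic statement. -/
private lemma core (U V : Matrix (Fin n) (Fin n) ℂ) (a b : Fin n → ℝ)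
    (hU : U * star U = 1) (hU' : star U * U = 1)
    (hV : V * star V = 1) (hV' : star V * V = 1)
    (ha : ∀ i, 0 < a i) (hb : ∀ i, 0 < b i)
    (htr : ∑ i, a i = ∑ j, b j)
    (hrel : trace ((U * diagonal (fun i => (a i : ℂ)) * star U) *
          (U * diagonal (fun i => (Real.log (a i) : ℂ)) * star U)
        - (U * diagonal (fun i => (a i : ℂ)) * star U) *
          (V * diagonal (fun j => (Real.log (b j) : ℂ)) * star V)) = 0) :
    U * diagonal (fun i => (a i : ℂ)) * star U =
      V * diagonal (fun j => (b j : ℂ)) * star V := by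
  classical
  set W : Matrix (Fin n) (Fin n) ℂ := star U * V with hWdef
  have hsW : star W = star V * U := by rw [hWdef]; simp
  have hWW : W * star W = 1 := by
    rw [hsW, hWdef, Matrix.mul_assoc, ← Matrix.mul_assoc V, hV, one_mul, hU']
  have hWW' : star W * W = 1 := by
    rw [hsW, hWdef, Matrix.mul_assoc, ← Matrix.mul_assoc U, hU, one_mul, hV']
  -- row and column sums of |W i j|²
  have hrow : ∀ i, ∑ j, Complex.normSq (W i j) = 1 := by
    intro i
    have h := congrFun (congrFun hWW i) i
    simp only [Matrix.mul_apply, Matrix.star_apply, Matrix.one_apply_eq] at h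
    have h' : ((∑ j, Complex.normSq (W i j) : ℝ) : ℂ) = 1 := by
      push_cast
      rw [← h]
      exact Finset.sum_congr rfl fun j _ => by
        rw [Complex.star_def, Complex.mul_conj]
    exact_mod_cast h'
  have hcol : ∀ j, ∑ i, Complex.normSq (W i j) = 1 := by
    intro j
    have h := congrFun (congrFun hWW' j) j
    simp only [Matrix.mul_apply, Matrix.star_apply, Matrix.one_apply_eq] at h
    have h' : ((∑ i, Complex.normSq (W i j) : ℝ) : ℂ) = 1 := by
      push_cast
      rw [← h]
      exact Finset.sum_congr rfl fun i _ => by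
        rw [Complex.star_def, mul_comm, Complex.mul_conj]
    exact_mod_cast h'
  -- trace computations
  have t₁ : trace ((U * diagonal (fun i => (a i : ℂ)) * star U) *
        (U * diagonal (fun i => (Real.log (a i) : ℂ)) * star U))
      = ((∑ i, a i * Real.log (a i) : ℝ) : ℂ) := by
    rw [trace_conj_mul, hU']
    simp only [one_mul, mul_one, diagonal_mul_diagonal, trace_diagonal]
    push_cast
    rfl
  have t₂ : trace ((U * diagonal (fun i => (a i : ℂ)) * star U) *
        (V * diagonal (fun j => (Real.log (b j) : ℂ)) * star V))
      = ((∑ i, ∑ j, a i * Real.log (b j) * Complex.normSq (W i j) : ℝ) : ℂ) := by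
    rw [trace_conj_mul, ← hWdef, ← hsW, Matrix.star_eq_conjTranspose W, trace_diag_sum]
    push_cast
    refine Finset.sum_congr rfl fun i _ => Finset.sum_congr rfl fun j _ => ?_
    rw [mul_right_comm (W i j), Complex.mul_conj]
    push_cast
    ring
  have h0 : (∑ i, a i * Real.log (a i))
      - (∑ i, ∑ j, a i * Real.log (b j) * Complex.normSq (W i j)) = 0 := by
    have h := hrel
    rw [trace_sub, t₁, t₂] at h
    exact_mod_cast h
  -- nonnegative terms summing to zero
  set T : Fin n → Fin n → ℝ := fun i j =>
    Complex.normSq (W i j) * (a i * (Real.log (a i) - Real.log (b j)) - (a i - b j)) with hTdef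
  have hT0 : ∀ i j, 0 ≤ T i j := fun i j =>
    mul_nonneg (Complex.normSq_nonneg _) (sub_nonneg.mpr (aux_ineq (ha i) (hb j)))
  have eA : ∑ i, ∑ j, Complex.normSq (W i j) * (a i * Real.log (a i))
      = ∑ i, a i * Real.log (a i) := by
    refine Finset.sum_congr rfl fun i _ => ?_
    rw [← Finset.sum_mul, hrow i, one_mul]
  have eC : ∑ i, ∑ j, Complex.normSq (W i j) * a i = ∑ i, a i := by
    refine Finset.sum_congr rfl fun i _ => ?_
    rw [← Finset.sum_mul, hrow i, one_mul]
  have eD : ∑ i, ∑ j, Complex.normSq (W i j) * b j = ∑ j, b j := by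
    rw [Finset.sum_comm]
    refine Finset.sum_congr rfl fun j _ => ?_
    rw [← Finset.sum_mul, hcol j, one_mul]
  have hTsum : ∑ i, ∑ j, T i j = 0 := by
    have expand : ∀ i j, T i j =
        Complex.normSq (W i j) * (a i * Real.log (a i))
        - a i * Real.log (b j) * Complex.normSq (W i j)
        - Complex.normSq (W i j) * a i + Complex.normSq (W i j) * b j := by
      intro i j; rw [hTdef]; ring
    have : ∑ i, ∑ j, T i j =
        (∑ i, ∑ j, Complex.normSq (W i j) * (a i * Real.log (a i)))
        - (∑ i, ∑ j, a i * Real.log (b j) * Complex.normSq (W i j))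
        - (∑ i, ∑ j, Complex.normSq (W i j) * a i)
        + (∑ i, ∑ j, Complex.normSq (W i j) * b j) := by
      simp only [expand, Finset.sum_sub_distrib, Finset.sum_add_distrib]
    rw [this, eA, eC, eD]
    linarith
  have hTzero : ∀ i j, T i j = 0 := by
    intro i j
    have h1 := (Finset.sum_eq_zero_iff_of_nonneg
      (fun i _ => Finset.sum_nonneg fun j _ => hT0 i j)).mp hTsum i (Finset.mem_univ i)
    exact (Finset.sum_eq_zero_iff_of_nonneg (fun j _ => hT0 i j)).mp h1 j (Finset.mem_univ j)
  have heq : ∀ i j, W i j ≠ 0 → a i = b j := by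
    intro i j hne
    by_contra hab'
    have h1 : 0 < Complex.normSq (W i j) := Complex.normSq_pos.mpr hne
    have h2 : 0 < a i * (Real.log (a i) - Real.log (b j)) - (a i - b j) :=
      sub_pos.mpr (aux_ineq_strict (ha i) (hb j) hab')
    have h3 : Complex.normSq (W i j) *
        (a i * (Real.log (a i) - Real.log (b j)) - (a i - b j)) = 0 := hTzero i j
    nlinarith [mul_pos h1 h2]
  -- conclude matrix equality
  have hdiag : W * diagonal (fun j => (b j : ℂ)) * star W
      = diagonal (fun i => (a i : ℂ)) := by
    ext i k
    have h1 : (W * diagonal (fun j => (b j : ℂ)) * star W) i k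
        = ∑ j, W i j * (b j : ℂ) * star (W k j) := by
      simp [Matrix.mul_apply, Matrix.star_apply, Matrix.diagonal, mul_ite, ite_mul,
        Finset.sum_ite_eq, Finset.sum_ite_eq']
    rw [h1]
    have h2 : ∑ j, W i j * (b j : ℂ) * star (W k j)
        = (a i : ℂ) * ∑ j, W i j * star (W k j) := by
      rw [Finset.mul_sum]
      refine Finset.sum_congr rfl fun j _ => ?_
      rcases eq_or_ne (W i j) 0 with h | h
      · simp [h]
      · rw [heq i j h]; ring
    rw [h2]
    have h3 : ∑ j, W i j * star (W k j) = (1 : Matrix (Fin n) (Fin n) ℂ) i k := by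
      rw [← hWW]
      simp [Matrix.mul_apply, Matrix.star_apply]
    rw [h3]
    rcases eq_or_ne i k with rfl | h
    · simp
    · simp [Matrix.one_apply_ne h, Matrix.diagonal_apply_ne _ h]
  have hUV : U * W = V := by rw [hWdef, ← Matrix.mul_assoc, hU, one_mul]
  calc U * diagonal (fun i => (a i : ℂ)) * star U
      = U * (W * diagonal (fun j => (b j : ℂ)) * star W) * star U := by rw [hdiag]
    _ = (U * W) * diagonal (fun j => (b j : ℂ)) * star (U * W) := by
        rw [show star (U * W) = star W * star U from Matrix.star_mul U W]
        simp only [Matrix.mul_assoc]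
    _ = V * diagonal (fun j => (b j : ℂ)) * star V := by rw [hUV]

/-- If `ρ₁, ρ₂` are positive semidefinite Hermitian matrices with `Tr ρ₁ = Tr ρ₂` and with
all eigenvalues in `(0, M]`, and the relative entropy
`Tr(ρ₁ log ρ₁ − ρ₁ log ρ₂)` vanishes, then `ρ₁ = ρ₂`. -/
theorem relative_entropy_eq_zero_iff (M : ℝ) (hM : 0 < M)
    (ρ₁ ρ₂ : Matrix (Fin n) (Fin n) ℂ)
    (h₁ : ρ₁.PosSemidef) (h₂ : ρ₂.PosSemidef)
    (hev₁ : ∀ i, h₁.1.eigenvalues i ∈ Set.Ioc (0 : ℝ) M)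
    (hev₂ : ∀ i, h₂.1.eigenvalues i ∈ Set.Ioc (0 : ℝ) M)
    (htr : Matrix.trace ρ₁ = Matrix.trace ρ₂)
    (hrel : Matrix.trace
      (ρ₁ * hermitianApply Real.log ρ₁ h₁.1 - ρ₁ * hermitianApply Real.log ρ₂ h₂.1) = 0) :
    ρ₁ = ρ₂ := by
  classical
  have hU : (h₁.1.eigenvectorUnitary : Matrix (Fin n) (Fin n) ℂ) *
      star (h₁.1.eigenvectorUnitary : Matrix (Fin n) (Fin n) ℂ) = 1 :=
    (Matrix.mem_unitaryGroup_iff).mp h₁.1.eigenvectorUnitary.2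
  have hU' : star (h₁.1.eigenvectorUnitary : Matrix (Fin n) (Fin n) ℂ) *
      (h₁.1.eigenvectorUnitary : Matrix (Fin n) (Fin n) ℂ) = 1 :=
    (Matrix.mem_unitaryGroup_iff').mp h₁.1.eigenvectorUnitary.2
  have hV : (h₂.1.eigenvectorUnitary : Matrix (Fin n) (Fin n) ℂ) *
      star (h₂.1.eigenvectorUnitary : Matrix (Fin n) (Fin n) ℂ) = 1 :=
    (Matrix.mem_unitaryGroup_iff).mp h₂.1.eigenvectorUnitary.2
  have hV' : star (h₂.1.eigenvectorUnitary : Matrix (Fin n) (Fin n) ℂ) *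
      (h₂.1.eigenvectorUnitary : Matrix (Fin n) (Fin n) ℂ) = 1 :=
    (Matrix.mem_unitaryGroup_iff').mp h₂.1.eigenvectorUnitary.2
  have hρ₁ : ρ₁ = (h₁.1.eigenvectorUnitary : Matrix (Fin n) (Fin n) ℂ) *
      diagonal (fun i => (h₁.1.eigenvalues i : ℂ)) *
      star (h₁.1.eigenvectorUnitary : Matrix (Fin n) (Fin n) ℂ) := h₁.1.spectral_theorem
  have hρ₂ : ρ₂ = (h₂.1.eigenvectorUnitary : Matrix (Fin n) (Fin n) ℂ) *
      diagonal (fun i => (h₂.1.eigenvalues i : ℂ)) *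
      star (h₂.1.eigenvectorUnitary : Matrix (Fin n) (Fin n) ℂ) := h₂.1.spectral_theorem
  have htr' : ∑ i, h₁.1.eigenvalues i = ∑ j, h₂.1.eigenvalues j := by
    have h := htr
    rw [hρ₁, hρ₂, trace_conj_diag_eq _ hU', trace_conj_diag_eq _ hV'] at h
    exact_mod_cast h
  have hmain := core (h₁.1.eigenvectorUnitary : Matrix (Fin n) (Fin n) ℂ)
    (h₂.1.eigenvectorUnitary : Matrix (Fin n) (Fin n) ℂ)
    h₁.1.eigenvalues h₂.1.eigenvalues hU hU' hV hV'
    (fun i => (hev₁ i).1) (fun i => (hev₂ i).1) htr'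
    (by rw [← hρ₁]
        exact hrel)
  rw [hρ₁, hρ₂]
  exact hmain
end

section
/- Let ρ_k ≥ 0 be a sequence of nonnegative reals and φ_k an orthonormal family in L²(0,1) ∩ H¹(0,1). Set n(x) = Σ_k ρ_k |φ_k(x)|², and assume E := Σ_k ρ_k(‖φ_k‖_{L²}² + ‖φ_k'‖_{L²}²) < ∞ and J := (Σ_k ρ_k²)^{1/2} < ∞. Then there is a universal constant C with ‖n‖_{L^∞(0,1)} ≤ C · J^{1/4} · E^{3/4}. -/
/-!
Fix `x` and a window `I ∋ x` of length `h ≤ 1` inside `[0, 1]`. Comparing `φ_k(x)` with the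
mean of `φ_k` over `I` (fundamental theorem of calculus, then Cauchy–Schwarz) gives
`|φ_k(x)|² ≤ 2h ‖φ_k'‖²_{L²} + 2 |⟨𝟙_I, φ_k⟩|² / h²`. Weighting by `ρ_k ≤ J` and using Bessel's
inequality `Σ_k |⟨𝟙_I, φ_k⟩|² ≤ ‖𝟙_I‖² = h` for the orthonormal family yields
`n(x) ≤ 2hE + 2J/h`. Since `‖φ_k‖ = 1` we have `J ≤ Σ_k ρ_k ≤ E`, so `h = √(J/E)` is admissible
and gives `n(x) ≤ 4 √(JE) ≤ 4 J^{1/4} E^{3/4}`.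
-/

open MeasureTheory Set

section

variable {α : Type*} [MeasurableSpace α] {μ : Measure α}

theorem sq_setIntegral_le_measureReal_mul {s : Set α} {g : α → ℝ} (hμs : μ s ≠ ⊤)
    (hg : IntegrableOn g s μ) (hg2 : IntegrableOn (fun x => g x ^ 2) s μ) :
    (∫ x in s, g x ∂μ) ^ 2 ≤ μ.real s * ∫ x in s, g x ^ 2 ∂μ := by
  rcases eq_or_ne (μ s) 0 with hs0 | hs0
  · simp [Measure.restrict_eq_zero.2 hs0]
  have hm : 0 < μ.real s := ENNReal.toReal_pos hs0 hμs
  have jensen := (Even.convexOn_pow even_two).map_set_average_le (continuousOn_pow 2)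
    isClosed_univ hs0 hμs (by simp) hg hg2
  simp only [setAverage_eq, smul_eq_mul] at jensen
  calc (∫ x in s, g x ∂μ) ^ 2 = μ.real s ^ 2 * ((μ.real s)⁻¹ * ∫ x in s, g x ∂μ) ^ 2 := by
        field_simp
    _ ≤ μ.real s ^ 2 * ((μ.real s)⁻¹ * ∫ x in s, g x ^ 2 ∂μ) := by gcongr
    _ = μ.real s * ∫ x in s, g x ^ 2 ∂μ := by field_simp

variable {𝕜 : Type*} [RCLike 𝕜]

theorem integral_norm_sq_eq_one_of_integral_conj_mul_self {f : α → 𝕜}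
    (hf : ∫ x, (starRingEnd 𝕜) (f x) * f x ∂μ = 1) : ∫ x, ‖f x‖ ^ 2 ∂μ = 1 := by
  simp_rw [RCLike.conj_mul, ← RCLike.ofReal_pow, integral_ofReal] at hf
  exact_mod_cast hf

variable {ι : Type*} [DecidableEq ι] {φ : ι → α → 𝕜}

theorem orthonormal_toLp (hφ : ∀ k, MemLp (φ k) 2 μ)
    (horth : ∀ j k, ∫ x, (starRingEnd 𝕜) (φ j x) * φ k x ∂μ = if j = k then 1 else 0) :
    Orthonormal 𝕜 fun k => (hφ k).toLp (φ k) := by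
  rw [orthonormal_iff_ite]
  intro j k
  rw [L2.inner_def, ← horth j k]
  refine integral_congr_ae ?_
  filter_upwards [(hφ j).coeFn_toLp, (hφ k).coeFn_toLp] with x hj hk
  rw [hj, hk, RCLike.inner_apply, mul_comm]

theorem summable_and_tsum_norm_sq_setIntegral_le_measureReal (hφ : ∀ k, MemLp (φ k) 2 μ)
    (horth : ∀ j k, ∫ x, (starRingEnd 𝕜) (φ j x) * φ k x ∂μ = if j = k then 1 else 0)
    {s : Set α} (hs : MeasurableSet s) (hμs : μ s ≠ ⊤) :
    Summable (fun k => ‖∫ x in s, φ k x ∂μ‖ ^ 2) ∧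
      ∑' k, ‖∫ x in s, φ k x ∂μ‖ ^ 2 ≤ μ.real s := by
  set χ := indicatorConstLp 2 hs hμs (1 : 𝕜)
  have hχ : ∀ k, ‖∫ x in s, φ k x ∂μ‖ = ‖inner 𝕜 ((hφ k).toLp (φ k)) χ‖ := fun k => by
    rw [norm_inner_symm, L2.inner_indicatorConstLp_one]
    exact congrArg _ (setIntegral_congr_ae hs <| by
      filter_upwards [(hφ k).coeFn_toLp] with x hx _ using hx.symm)
  have hnorm : ‖χ‖ ^ 2 = μ.real s := by
    rw [norm_indicatorConstLp two_ne_zero ENNReal.ofNat_ne_top, norm_one, one_mul,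
      ← Real.rpow_natCast, ← Real.rpow_mul measureReal_nonneg]
    norm_num
  simp_rw [hχ, ← hnorm]
  exact ⟨(orthonormal_toLp hφ horth).inner_products_summable χ,
    (orthonormal_toLp hφ horth).tsum_inner_products_le χ⟩

end

theorem exists_mem_Icc_add_of_mem_Icc {x h : ℝ} (hx : x ∈ Icc (0 : ℝ) 1) (hh0 : 0 ≤ h)
    (hh1 : h ≤ 1) : ∃ a, 0 ≤ a ∧ a + h ≤ 1 ∧ x ∈ Icc a (a + h) := by
  refine ⟨min x (1 - h), le_min hx.1 (by linarith), by linarith [min_le_right x (1 - h)],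
    min_le_left _ _, ?_⟩
  rcases le_total x (1 - h) with hxh | hxh
  · rw [min_eq_left hxh]; linarith
  · rw [min_eq_right hxh]; linarith [hx.2]

section Derivative

variable {E : Type*} [NormedAddCommGroup E] [NormedSpace ℝ E] [CompleteSpace E] {φ D : ℝ → E}
  {s : Set ℝ} {a b x : ℝ}

theorem norm_smul_sub_setIntegral_le (hs : s.OrdConnected)
    (hder : ∀ y ∈ s, HasDerivAt φ (D y) y) (hab : a ≤ b) (hIs : Ioo a b ⊆ s) (hxs : x ∈ s)
    (hx : x ∈ Icc a b) (hφ : IntegrableOn φ (Ioo a b)) (hD : IntegrableOn D (Ioo a b)) :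
    ‖(b - a) • φ x - ∫ y in Ioo a b, φ y‖ ≤ (b - a) * ∫ y in Ioo a b, ‖D y‖ := by
  have hDI : IntegrableOn D (Icc a b) := by rwa [integrableOn_Icc_iff_integrableOn_Ioo]
  have hosc : ∀ y ∈ Ioo a b, ‖φ x - φ y‖ ≤ ∫ t in Ioo a b, ‖D t‖ := by
    intro y hy
    have hyx : uIcc y x ⊆ Icc a b := ordConnected_Icc.uIcc_subset (Ioo_subset_Icc_self hy) hx
    rw [← intervalIntegral.integral_eq_sub_of_hasDerivAt
      (fun t ht => hder t (hs.uIcc_subset (hIs hy) hxs ht)) (hDI.mono_set hyx).intervalIntegrable,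
      ← integral_Icc_eq_integral_Ioo]
    exact intervalIntegral.norm_integral_le_integral_norm_uIoc.trans <|
      setIntegral_mono_set hDI.norm (.of_forall fun _ => norm_nonneg _)
        (uIoc_subset_uIcc.trans hyx).eventuallyLE
  have hsplit : (b - a) • φ x - ∫ y in Ioo a b, φ y = ∫ y in Ioo a b, (φ x - φ y) := by
    rw [integral_sub (integrableOn_const measure_Ioo_lt_top.ne (C := φ x)) hφ, setIntegral_const,
      Real.volume_real_Ioo_of_le hab]
  rw [hsplit, mul_comm, ← Real.volume_real_Ioo_of_le hab]
  exact norm_setIntegral_le_of_norm_le_const measure_Ioo_lt_top hosc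

theorem norm_sq_le_of_hasDerivAt (hs : s.OrdConnected)
    (hder : ∀ y ∈ s, HasDerivAt φ (D y) y) (hab : a < b) (hIs : Ioo a b ⊆ s) (hxs : x ∈ s)
    (hx : x ∈ Icc a b) (hφ : IntegrableOn φ (Ioo a b)) (hD : IntegrableOn D (Ioo a b))
    (hD2 : IntegrableOn (fun y => ‖D y‖ ^ 2) (Ioo a b)) :
    ‖φ x‖ ^ 2 ≤
      2 * ((b - a) * ∫ y in Ioo a b, ‖D y‖ ^ 2) + 2 * (‖∫ y in Ioo a b, φ y‖ / (b - a)) ^ 2 := by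
  set P := ∫ y in Ioo a b, ‖D y‖
  set Q := ‖∫ y in Ioo a b, φ y‖ / (b - a)
  have hba : 0 < b - a := sub_pos.2 hab
  have hφx : ‖φ x‖ ≤ P + Q := by
    have := (norm_le_norm_sub_add ((b - a) • φ x) (∫ y in Ioo a b, φ y)).trans
      (add_le_add_left (norm_smul_sub_setIntegral_le hs hder hab.le hIs hxs hx hφ hD) _)
    rwa [norm_smul, Real.norm_of_nonneg hba.le, ← le_div_iff₀' hba, add_div,
      mul_div_cancel_left₀ _ hba.ne'] at this
  have hP : P ^ 2 ≤ (b - a) * ∫ y in Ioo a b, ‖D y‖ ^ 2 := by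
    simpa [Real.volume_real_Ioo_of_le hab.le] using
      sq_setIntegral_le_measureReal_mul measure_Ioo_lt_top.ne hD.norm hD2
  calc ‖φ x‖ ^ 2 ≤ (P + Q) ^ 2 := by gcongr
    _ ≤ 2 * P ^ 2 + 2 * Q ^ 2 := by linarith [add_sq_le (a := P) (b := Q)]
    _ ≤ _ := by gcongr

end Derivative

section Regularity

variable {E : Type*} [NormedAddCommGroup E] [NormedSpace ℝ E] {φ D : ℝ → E} {s : Set ℝ}

theorem memLp_two_restrict_of_hasDerivAt_s6 (hs : MeasurableSet s)
    (hder : ∀ y ∈ s, HasDerivAt φ (D y) y) (hφ2 : IntegrableOn (fun y => ‖φ y‖ ^ 2) s) :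
    MemLp φ 2 (volume.restrict s) :=
  (memLp_two_iff_integrable_sq_norm <| ContinuousOn.aestronglyMeasurable
    (fun y hy => (hder y hy).continuousAt.continuousWithinAt) hs).2 hφ2

theorem memLp_two_restrict_deriv_of_hasDerivAt [CompleteSpace E] (hs : MeasurableSet s)
    (hder : ∀ y ∈ s, HasDerivAt φ (D y) y) (hD2 : IntegrableOn (fun y => ‖D y‖ ^ 2) s) :
    MemLp D 2 (volume.restrict s) := by
  refine (memLp_two_iff_integrable_sq_norm <|
    (aestronglyMeasurable_deriv φ _).congr ?_).2 hD2
  filter_upwards [ae_restrict_mem hs] with y hy using (hder y hy).deriv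

end Regularity

theorem sqrt_tsum_sq_le_tsum {ι : Type*} {ρ e : ι → ℝ} (hρ : ∀ k, 0 ≤ ρ k) (hρe : ∀ k, ρ k ≤ e k)
    (he : Summable e) : √(∑' k, ρ k ^ 2) ≤ ∑' k, e k := by
  have he0 : ∀ k, 0 ≤ e k := fun k => (hρ k).trans (hρe k)
  have hρs : Summable ρ := he.of_nonneg_of_le hρ hρe
  have hρ_le : ∀ k, ρ k ^ 2 ≤ (∑' j, e j) * ρ k := fun k => by
    rw [sq]
    exact mul_le_mul_of_nonneg_right ((hρe k).trans (he.le_tsum k fun j _ => he0 j)) (hρ k)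
  rw [Real.sqrt_le_left (tsum_nonneg he0)]
  calc ∑' k, ρ k ^ 2 ≤ ∑' k, (∑' j, e j) * ρ k :=
        (hρs.mul_left _).of_nonneg_of_le (fun k => sq_nonneg _) hρ_le |>.tsum_le_tsum hρ_le
          (hρs.mul_left _)
    _ = (∑' j, e j) * ∑' k, ρ k := tsum_mul_left
    _ ≤ (∑' j, e j) ^ 2 := by
        rw [sq]; exact mul_le_mul_of_nonneg_left (hρs.tsum_le_tsum hρe he) (tsum_nonneg he0)

theorem exists_pos_le_one_two_mul_add_two_div_le {J E : ℝ} (hJ : 0 < J) (hJE : J ≤ E) :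
    ∃ h : ℝ, 0 < h ∧ h ≤ 1 ∧ 2 * h * E + 2 * J / h ≤ 4 * J ^ (1 / 4 : ℝ) * E ^ (3 / 4 : ℝ) := by
  have hE : 0 < E := hJ.trans_le hJE
  have pow_quarter : ∀ {t : ℝ}, 0 ≤ t → t = (t ^ (1 / 4 : ℝ)) ^ 4 := fun ht => by
    rw [← Real.rpow_natCast, ← Real.rpow_mul ht]; norm_num
  have hE3 : E ^ (3 / 4 : ℝ) = (E ^ (1 / 4 : ℝ)) ^ 3 := by
    rw [← Real.rpow_natCast, ← Real.rpow_mul hE.le]; norm_num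
  have hu : 0 < J ^ (1 / 4 : ℝ) := Real.rpow_pos_of_pos hJ _
  have huv : J ^ (1 / 4 : ℝ) ≤ E ^ (1 / 4 : ℝ) := Real.rpow_le_rpow hJ.le hJE (by norm_num)
  have hJu := pow_quarter hJ.le
  have hEv := pow_quarter hE.le
  clear pow_quarter
  rw [hE3]
  generalize J ^ (1 / 4 : ℝ) = u at *
  generalize E ^ (1 / 4 : ℝ) = v at *
  subst hJu hEv
  -- `J = u⁴`, `E = v⁴`; the window `h = (u / v)² = √(J / E)` makes both terms equal `2 u² v²`
  have hv : 0 < v := hu.trans_le huv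
  refine ⟨(u / v) ^ 2, by positivity, pow_le_one₀ (by positivity) ((div_le_one hv).2 huv), ?_⟩
  field_simp
  nlinarith [mul_pos hu hv, mul_le_mul_of_nonneg_left huv (by positivity : 0 ≤ u * v ^ 2)]

theorem tsum_mul_norm_sq_le_two_mul_add_two_div {𝕜 ι : Type*} [RCLike 𝕜] [DecidableEq ι]
    {ρ : ι → ℝ} {φ D : ι → ℝ → 𝕜} {J h x : ℝ} (hρ : ∀ k, 0 ≤ ρ k) (hρJ : ∀ k, ρ k ≤ J) (hJ : 0 ≤ J)
    (hder : ∀ k, ∀ y ∈ Ioo (0 : ℝ) 1, HasDerivAt (φ k) (D k y) y)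
    (hφ2 : ∀ k, IntegrableOn (fun y => ‖φ k y‖ ^ 2) (Ioo 0 1))
    (hD2 : ∀ k, IntegrableOn (fun y => ‖D k y‖ ^ 2) (Ioo 0 1))
    (horth : ∀ j k, (∫ y in Ioo (0 : ℝ) 1, (starRingEnd 𝕜) (φ j y) * φ k y) =
      if j = k then 1 else 0)
    (hE : Summable fun k => ρ k *
      ((∫ y in Ioo (0 : ℝ) 1, ‖φ k y‖ ^ 2) + ∫ y in Ioo (0 : ℝ) 1, ‖D k y‖ ^ 2))
    (hx : x ∈ Ioo (0 : ℝ) 1) (hh0 : 0 < h) (hh1 : h ≤ 1) :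
    ∑' k, ρ k * ‖φ k x‖ ^ 2 ≤
      2 * h * (∑' k, ρ k *
        ((∫ y in Ioo (0 : ℝ) 1, ‖φ k y‖ ^ 2) + ∫ y in Ioo (0 : ℝ) 1, ‖D k y‖ ^ 2)) +
      2 * J / h := by
  obtain ⟨a, ha0, hah1, hxI⟩ := exists_mem_Icc_add_of_mem_Icc (Ioo_subset_Icc_self hx) hh0.le hh1
  have hI : Ioo a (a + h) ⊆ Ioo 0 1 := Ioo_subset_Ioo ha0 hah1
  have hφmem k := memLp_two_restrict_of_hasDerivAt_s6 measurableSet_Ioo (hder k) (hφ2 k)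
  have hDmem k := memLp_two_restrict_deriv_of_hasDerivAt measurableSet_Ioo (hder k) (hD2 k)
  set c := fun k => ‖∫ y in Ioo a (a + h), φ k y‖ ^ 2
  have hpt : ∀ k, ‖φ k x‖ ^ 2 ≤
      2 * h * (∫ y in Ioo (0 : ℝ) 1, ‖D k y‖ ^ 2) + 2 / h ^ 2 * c k := by
    intro k
    have hwin := norm_sq_le_of_hasDerivAt ordConnected_Ioo (hder k) (by linarith) hI hx hxI
      (IntegrableOn.mono_set ((hφmem k).integrable one_le_two) hI)
      (IntegrableOn.mono_set ((hDmem k).integrable one_le_two) hI) ((hD2 k).mono_set hI)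
    have hmono : ∫ y in Ioo a (a + h), ‖D k y‖ ^ 2 ≤ ∫ y in Ioo (0 : ℝ) 1, ‖D k y‖ ^ 2 :=
      setIntegral_mono_set (hD2 k) (.of_forall fun _ => sq_nonneg _) hI.eventuallyLE
    rw [add_sub_cancel_left, div_pow] at hwin
    calc ‖φ k x‖ ^ 2 ≤ _ := hwin
      _ = 2 * h * (∫ y in Ioo a (a + h), ‖D k y‖ ^ 2) + 2 / h ^ 2 * c k := by ring
      _ ≤ _ := by gcongr
  obtain ⟨hc, hcle⟩ : Summable c ∧ ∑' k, c k ≤ h := by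
    have := summable_and_tsum_norm_sq_setIntegral_le_measureReal hφmem horth measurableSet_Ioo
      (s := Ioo a (a + h)) (measure_ne_top _ _)
    rwa [Measure.restrict_restrict measurableSet_Ioo, inter_eq_self_of_subset_left hI,
      measureReal_restrict_apply measurableSet_Ioo, inter_eq_self_of_subset_left hI,
      Real.volume_real_Ioo_of_le (by linarith), add_sub_cancel_left] at this
  set e := fun k => ρ k *
    ((∫ y in Ioo (0 : ℝ) 1, ‖φ k y‖ ^ 2) + ∫ y in Ioo (0 : ℝ) 1, ‖D k y‖ ^ 2)
  have hterm : ∀ k, ρ k * ‖φ k x‖ ^ 2 ≤ 2 * h * e k + 2 * J / h ^ 2 * c k := by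
    intro k
    have hφk : 0 ≤ ∫ y in Ioo (0 : ℝ) 1, ‖φ k y‖ ^ 2 := integral_nonneg fun _ => sq_nonneg _
    calc ρ k * ‖φ k x‖ ^ 2
        ≤ ρ k * (2 * h * (∫ y in Ioo (0 : ℝ) 1, ‖D k y‖ ^ 2) + 2 / h ^ 2 * c k) :=
          mul_le_mul_of_nonneg_left (hpt k) (hρ k)
      _ = 2 * h * (ρ k * ∫ y in Ioo (0 : ℝ) 1, ‖D k y‖ ^ 2) + 2 / h ^ 2 * (ρ k * c k) := by ring
      _ ≤ 2 * h * e k + 2 / h ^ 2 * (J * c k) := by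
          have hDe : ρ k * ∫ y in Ioo (0 : ℝ) 1, ‖D k y‖ ^ 2 ≤ e k :=
            mul_le_mul_of_nonneg_left (le_add_of_nonneg_left hφk) (hρ k)
          have hcJ : ρ k * c k ≤ J * c k := mul_le_mul_of_nonneg_right (hρJ k) (sq_nonneg _)
          gcongr
      _ = 2 * h * e k + 2 * J / h ^ 2 * c k := by ring
  have hbound := (hE.mul_left (2 * h)).add (hc.mul_left (2 * J / h ^ 2))
  calc ∑' k, ρ k * ‖φ k x‖ ^ 2 ≤ ∑' k, (2 * h * e k + 2 * J / h ^ 2 * c k) :=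
        (hbound.of_nonneg_of_le (fun k => by positivity [hρ k]) hterm).tsum_le_tsum hterm hbound
    _ = 2 * h * ∑' k, e k + 2 * J / h ^ 2 * ∑' k, c k := by
        rw [(hE.mul_left _).tsum_add (hc.mul_left _), tsum_mul_left, tsum_mul_left]
    _ ≤ 2 * h * ∑' k, e k + 2 * J / h ^ 2 * h := by gcongr
    _ = 2 * h * ∑' k, e k + 2 * J / h := by field_simp

/-- Lieb–Thirring-type bound: there is a universal constant `C` such that for every
sequence `ρ_k ≥ 0` and orthonormal family `(φ_k)` in `L²(0,1) ∩ H¹(0,1)` (with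
derivatives `D_k` on `(0,1)`), if
`E = Σ_k ρ_k(‖φ_k‖_{L²}² + ‖φ_k'‖_{L²}²) < ∞` and `J = (Σ_k ρ_k²)^{1/2} < ∞`, then
`n(x) = Σ_k ρ_k |φ_k(x)|²` satisfies `‖n‖_{L^∞(0,1)} ≤ C J^{1/4} E^{3/4}`. -/
theorem localDensity_Linfty_bound :
    ∃ C > (0 : ℝ), ∀ (ρ : ℕ → ℝ) (φ D : ℕ → ℝ → ℂ),
      (∀ k, 0 ≤ ρ k) →
      (∀ k, ∀ x ∈ Ioo (0 : ℝ) 1, HasDerivAt (φ k) (D k x) x) →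
      (∀ k, IntegrableOn (fun x => ‖φ k x‖ ^ 2) (Ioo 0 1)) →
      (∀ k, IntegrableOn (fun x => ‖D k x‖ ^ 2) (Ioo 0 1)) →
      (∀ j k, (∫ x in Ioo (0 : ℝ) 1, (starRingEnd ℂ) (φ j x) * φ k x) =
        if j = k then 1 else 0) →
      Summable (fun k => ρ k *
        ((∫ x in Ioo (0 : ℝ) 1, ‖φ k x‖ ^ 2) + ∫ x in Ioo (0 : ℝ) 1, ‖D k x‖ ^ 2)) →
      Summable (fun k => (ρ k) ^ 2) →
      ∀ x ∈ Ioo (0 : ℝ) 1,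
        (∑' k, ρ k * ‖φ k x‖ ^ 2) ≤
          C * (Real.sqrt (∑' k, (ρ k) ^ 2)) ^ ((1 : ℝ) / 4) *
            (∑' k, ρ k * ((∫ y in Ioo (0 : ℝ) 1, ‖φ k y‖ ^ 2) +
              ∫ y in Ioo (0 : ℝ) 1, ‖D k y‖ ^ 2)) ^ ((3 : ℝ) / 4) := by
  refine ⟨4, by norm_num, fun ρ φ D hρ hder hφ2 hD2 horth hE hρ2 x hx => ?_⟩
  have hρJ : ∀ k, ρ k ≤ √(∑' k, ρ k ^ 2) := fun k =>
    Real.le_sqrt_of_sq_le (hρ2.le_tsum k fun j _ => sq_nonneg (ρ j))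
  have hρE : ∀ k, ρ k ≤ ρ k *
      ((∫ y in Ioo (0 : ℝ) 1, ‖φ k y‖ ^ 2) + ∫ y in Ioo (0 : ℝ) 1, ‖D k y‖ ^ 2) := fun k => by
    rw [integral_norm_sq_eq_one_of_integral_conj_mul_self (by simpa using horth k k)]
    exact le_mul_of_one_le_right (hρ k)
      (le_add_of_nonneg_right (integral_nonneg fun _ => sq_nonneg _))
  rcases (Real.sqrt_nonneg (∑' k, ρ k ^ 2)).eq_or_lt with hJ0 | hJpos
  · have hρ0 : ∀ k, ρ k = 0 := fun k => le_antisymm (hJ0 ▸ hρJ k) (hρ k)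
    simp [hρ0]
  obtain ⟨h, hh0, hh1, hbound⟩ :=
    exists_pos_le_one_two_mul_add_two_div_le hJpos (sqrt_tsum_sq_le_tsum hρ hρE hE)
  exact (tsum_mul_norm_sq_le_two_mul_add_two_div hρ hρJ hJpos.le hder hφ2 hD2 horth hE hx hh0
    hh1).trans hbound
end

section
/- For every M > 0 there exists C_M > 0 such that for all η ∈ (0,1] and all s ∈ [0, M], the regularized entropy β_η(s) := (s+η)log(s+η) − s − η log η satisfies |β_η(s)| ≤ C_M √s. -/
open Real

lemma log_one_add_le_two_sqrt {x : ℝ} (hx : 0 ≤ x) :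
    Real.log (1 + x) ≤ 2 * Real.sqrt x := by
  have h1 : Real.log (1 + x) = 2 * Real.log (Real.sqrt (1 + x)) := by
    rw [Real.log_sqrt (by linarith)]; ring
  have h2 : Real.log (Real.sqrt (1 + x)) ≤ Real.sqrt (1 + x) - 1 :=
    Real.log_le_sub_one_of_pos (Real.sqrt_pos.mpr (by linarith))
  have h3 : Real.sqrt (1 + x) ≤ 1 + Real.sqrt x := by
    nlinarith [Real.sq_sqrt (show (0:ℝ) ≤ 1 + x by linarith), Real.sq_sqrt hx,
      Real.sqrt_nonneg x, Real.sqrt_nonneg (1 + x)]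
  linarith

lemma neg_log_le_two_div_sqrt {x : ℝ} (hx : 0 < x) :
    -Real.log x ≤ 2 / Real.sqrt x := by
  have h2 : Real.log (Real.sqrt x)⁻¹ ≤ (Real.sqrt x)⁻¹ - 1 :=
    Real.log_le_sub_one_of_pos (by positivity)
  rw [Real.log_inv, Real.log_sqrt hx.le] at h2
  have hs : 0 < Real.sqrt x := Real.sqrt_pos.mpr hx
  rw [div_eq_mul_inv]
  nlinarith

/-- For every `M > 0` there exists `C_M > 0` such that for all `η ∈ (0,1]` and all
`s ∈ [0, M]`, the regularized entropy `β_η(s) = (s+η)log(s+η) − s − η log η`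
satisfies `|β_η(s)| ≤ C_M √s`. -/
theorem abs_regularized_entropy_le (M : ℝ) (hM : 0 < M) :
    ∃ C > 0, ∀ η ∈ Set.Ioc (0 : ℝ) 1, ∀ s ∈ Set.Icc (0 : ℝ) M,
      |(s + η) * Real.log (s + η) - s - η * Real.log η| ≤ C * Real.sqrt s := by
  have hlogM : 0 ≤ Real.log (M + 1) := Real.log_nonneg (by linarith)
  have hsM : 0 ≤ Real.sqrt M := Real.sqrt_nonneg M
  refine ⟨2 + Real.sqrt M * Real.log (M + 1) + 2 + Real.sqrt M, by nlinarith, ?_⟩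
  rintro η ⟨hη0, hη1⟩ s ⟨hs0, hsm⟩
  rcases eq_or_lt_of_le hs0 with h0 | hs
  · rw [← h0]
    simp
  have hx : 0 < s + η := by linarith
  have hss : 0 < Real.sqrt s := Real.sqrt_pos.mpr hs
  have hsqsM : Real.sqrt s ≤ Real.sqrt M := Real.sqrt_le_sqrt hsm
  have hsle : s ≤ Real.sqrt M * Real.sqrt s := by
    nlinarith [Real.sq_sqrt hs0]
  -- decompose
  have hdecomp : (s + η) * Real.log (s + η) - s - η * Real.log η
      = s * Real.log (s + η) + η * (Real.log (s + η) - Real.log η) - s := by ring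
  -- bound |s * log (s+η)|
  have hA : |s * Real.log (s + η)| ≤ (2 + Real.sqrt M * Real.log (M + 1)) * Real.sqrt s := by
    have hlogabs : |Real.log (s + η)| ≤ 2 / Real.sqrt s + Real.log (M + 1) := by
      rcases le_or_gt 0 (Real.log (s + η)) with hl | hl
      · rw [abs_of_nonneg hl]
        have : Real.log (s + η) ≤ Real.log (M + 1) :=
          Real.log_le_log hx (by linarith)
        have h2 : 0 ≤ 2 / Real.sqrt s := by positivity
        linarith
      · rw [abs_of_neg hl]
        have h1 : -Real.log (s + η) ≤ 2 / Real.sqrt (s + η) :=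
          neg_log_le_two_div_sqrt hx
        have h2 : 2 / Real.sqrt (s + η) ≤ 2 / Real.sqrt s := by
          apply div_le_div_of_nonneg_left (by norm_num) hss
          exact Real.sqrt_le_sqrt (by linarith)
        linarith
    rw [abs_mul, abs_of_nonneg hs0]
    have h3 : s * |Real.log (s + η)| ≤ s * (2 / Real.sqrt s + Real.log (M + 1)) :=
      mul_le_mul_of_nonneg_left hlogabs hs0
    have h4 : s * (2 / Real.sqrt s) = 2 * Real.sqrt s := by
      rw [mul_div_assoc', mul_comm s 2, mul_div_assoc, Real.div_sqrt]
    have h5 : s * Real.log (M + 1) ≤ Real.sqrt M * Real.sqrt s * Real.log (M + 1) := by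
      nlinarith
    nlinarith
  -- bound the middle term
  have hBnonneg : 0 ≤ η * (Real.log (s + η) - Real.log η) := by
    have : Real.log η ≤ Real.log (s + η) := Real.log_le_log hη0 (by linarith)
    nlinarith
  have hB : η * (Real.log (s + η) - Real.log η) ≤ 2 * Real.sqrt s := by
    have hlogdiv : Real.log (s + η) - Real.log η = Real.log (1 + s / η) := by
      rw [← Real.log_div hx.ne' hη0.ne']
      congr 1
      field_simp
      ring
    rw [hlogdiv]
    have h1 : Real.log (1 + s / η) ≤ 2 * Real.sqrt (s / η) :=
      log_one_add_le_two_sqrt (by positivity)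
    have h2 : η * Real.sqrt (s / η) = Real.sqrt η * Real.sqrt s := by
      rw [Real.sqrt_div hs0, mul_div_assoc']
      rw [show η * Real.sqrt s = Real.sqrt s * η by ring, mul_div_assoc,
        show η / Real.sqrt η = Real.sqrt η from Real.div_sqrt, mul_comm]
    have h3 : Real.sqrt η ≤ 1 := by
      rw [show (1:ℝ) = Real.sqrt 1 by simp]
      exact Real.sqrt_le_sqrt hη1
    have h4 : η * Real.log (1 + s / η) ≤ η * (2 * Real.sqrt (s / η)) :=
      mul_le_mul_of_nonneg_left h1 hη0.le
    nlinarith [Real.sqrt_nonneg η]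
  rw [hdecomp, abs_le]
  constructor
  · have := neg_abs_le (s * Real.log (s + η))
    nlinarith
  · have := le_abs_self (s * Real.log (s + η))
    nlinarith
end
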